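/- arXiv:math/0407216 — 3 statements merged into one kernel-verified Lean document; each statement's English description precedes it below -/
import Mathlib

section
/- Let Z be a countable set and for each e ∈ Z let ε_e ∈ (0,1]. Identify subsets of Z with elements of {0,1}^Z, equipped with the product σ-algebra and the pointwise (coordinatewise) partial order. Let ν be the product Bernoulli measure on {0,1}^Z under which the coordinates are independent and coordinate e equals 1 with probability ε_e. Let μ be a probability measure on {0,1}^Z such that for every e ∈ Z the conditional probability under μ of the event {A : A(e) = 1}, given the σ-algebra generated by the coordinates (A(e'))_{e' ≠ e}, is μ-almost surely at most ε_e. Then μ is stochastically dominated by ν, i.e. for every bounded measurable function f : {0,1}^Z → ℝ that is monotone with respect to the pointwise order, ∫ f dμ ≤ ∫ f dν. -/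
/-!
It suffices to compare `μ` and `ν` on measurable upper sets (layer-cake formula), and then, by
inner regularity, on closed upper sets: in the compact space `{0,1}^Z` the upper closure of a
closed set is closed. A closed upper set `K` is the limit, along finite `S ⊆ Z`, of the upper sets
`{A | (A on S, 1 off S) ∈ K}`, which depend only on the coordinates in `S`. For a monotone `f`
depending on finitely many coordinates, resample these one at a time: replacing `f` by
`(1 - p) f(A[e ↦ 0]) + p f(A[e ↦ 1])`, where `p = ν(A e = 1)`, leaves the `ν`-integral unchanged
by independence and does not decrease the `μ`-integral, because `f(A[e ↦ 1]) - f(A[e ↦ 0]) ≥ 0` is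
measurable with respect to the other coordinates, given which `A e = 1` has `μ`-conditional
probability at most `ε e ≤ p`.
-/

open MeasureTheory

/-- The sub-σ-algebra of the product σ-algebra on `{0,1}^Z` generated by the
coordinates `(A(e'))_{e' ≠ e}`. -/
def coordsExcept (Z : Type*) (e : Z) : MeasurableSpace (Z → Bool) :=
  MeasurableSpace.comap (fun (A : Z → Bool) (e' : {e' : Z // e' ≠ e}) => A (e' : Z))
    MeasurableSpace.pi

open ProbabilityTheory Filter Function Set Topology

section StochasticDomination

variable {α : Type*} [MeasurableSpace α] [Preorder α] {μ ν : Measure α}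

theorem lintegral_ofReal_le_of_forall_isUpperSet
    (h : ∀ U, MeasurableSet U → IsUpperSet U → μ U ≤ ν U) {f : α → ℝ}
    (hf : Measurable f) (hmono : Monotone f) (hnn : ∀ a, 0 ≤ f a) :
    ∫⁻ a, ENNReal.ofReal (f a) ∂μ ≤ ∫⁻ a, ENNReal.ofReal (f a) ∂ν := by
  rw [lintegral_eq_lintegral_meas_lt μ (ae_of_all _ hnn) hf.aemeasurable,
    lintegral_eq_lintegral_meas_lt ν (ae_of_all _ hnn) hf.aemeasurable]
  exact lintegral_mono fun t ↦
    h _ (hf measurableSet_Ioi) fun a b hab (ha : t < f a) ↦ ha.trans_le (hmono hab)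

theorem integral_le_integral_of_forall_isUpperSet [IsProbabilityMeasure μ]
    [IsProbabilityMeasure ν] (h : ∀ U, MeasurableSet U → IsUpperSet U → μ U ≤ ν U)
    {f : α → ℝ} (hf : Measurable f) (hmono : Monotone f) {C : ℝ} (hb : ∀ a, |f a| ≤ C) :
    ∫ a, f a ∂μ ≤ ∫ a, f a ∂ν := by
  have hint (ρ : Measure α) [IsFiniteMeasure ρ] : Integrable f ρ :=
    Integrable.of_bound hf.aestronglyMeasurable C (ae_of_all _ hb)
  have hnn (a : α) : 0 ≤ f a + C := by linarith [neg_abs_le (f a), hb a]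
  have hshift : ∫ a, (f a + C) ∂μ ≤ ∫ a, (f a + C) ∂ν := by
    rw [← ENNReal.ofReal_le_ofReal_iff (integral_nonneg hnn),
      ofReal_integral_eq_lintegral_ofReal (f := fun a ↦ f a + C)
        ((hint μ).add (integrable_const C)) (ae_of_all _ hnn),
      ofReal_integral_eq_lintegral_ofReal (f := fun a ↦ f a + C)
        ((hint ν).add (integrable_const C)) (ae_of_all _ hnn)]
    exact lintegral_ofReal_le_of_forall_isUpperSet h (hf.add_const C)
      (fun a b hab ↦ add_le_add_left (hmono hab) C) hnn
  simpa [integral_add (hint _) (integrable_const C)] using hshift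

end StochasticDomination

theorem IsClosed.upperClosure_of_compactSpace {X : Type*} [TopologicalSpace X] [Preorder X]
    [CompactSpace X] [OrderClosedTopology X] {F : Set X} (hF : IsClosed F) :
    IsClosed (upperClosure F : Set X) := by
  have hproj : (upperClosure F : Set X) =
      Prod.snd '' ({p : X × X | p.1 ≤ p.2} ∩ Prod.fst ⁻¹' F) := by
    ext b
    simp [and_comm]
  rw [hproj]
  exact isClosedMap_snd_of_compactSpace _ (isClosed_le_prod.inter (hF.preimage continuous_fst))

theorem measure_le_of_forall_isClosed_isUpperSet {X : Type*} [TopologicalSpace X]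
    [MeasurableSpace X] [Preorder X] [CompactSpace X] [OrderClosedTopology X]
    {μ ν : Measure X} [IsFiniteMeasure μ] [μ.WeaklyRegular]
    (h : ∀ K, IsClosed K → IsUpperSet K → μ K ≤ ν K) {U : Set X} (hU : MeasurableSet U)
    (hUu : IsUpperSet U) : μ U ≤ ν U := by
  refine ENNReal.le_of_forall_pos_le_add fun δ hδ _ ↦ ?_
  obtain ⟨F, hFU, hFc, hF⟩ :=
    hU.exists_isClosed_lt_add (measure_ne_top μ U) (ENNReal.coe_ne_zero.mpr hδ.ne')
  have hKU : (upperClosure F : Set X) ⊆ U := fun b ⟨a, ha, hab⟩ ↦ hUu hab (hFU ha)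
  calc μ U ≤ μ F + δ := hF.le
    _ ≤ μ (upperClosure F) + δ := add_le_add_left (measure_mono subset_upperClosure) _
    _ ≤ ν (upperClosure F) + δ :=
      add_le_add_left (h _ hFc.upperClosure_of_compactSpace (upperClosure F).upper) _
    _ ≤ ν U + δ := add_le_add_left (measure_mono hKU) _

lemma IsUpperSet.monotone_indicator_one {α : Type*} [Preorder α] {U : Set α}
    (hU : IsUpperSet U) :
    Monotone (U.indicator (1 : α → ℝ)) := fun a b hab ↦ by
  by_cases ha : a ∈ U
  · simp [ha, hU hab ha]
  · simp [ha, indicator_nonneg]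

lemma Finset.tendsto_piecewise_atTop {ι : Type*} {π : ι → Type*}
    [∀ i, TopologicalSpace (π i)] [DecidableEq ι] (f g : ∀ i, π i) :
    Tendsto (fun S : Finset ι ↦ S.piecewise f g) atTop (𝓝 f) :=
  tendsto_pi_nhds.mpr fun i ↦ tendsto_const_nhds.congr' <|
    (eventually_ge_atTop {i}).mono fun _ hS ↦
      (Finset.piecewise_eq_of_mem _ _ _ (hS (Finset.mem_singleton_self i))).symm

theorem integral_mul_condExp_of_stronglyMeasurable {Ω : Type*} {m m₀ : MeasurableSpace Ω}
    {μ : Measure Ω} (hm : m ≤ m₀) [SigmaFinite (μ.trim hm)] {g h : Ω → ℝ}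
    (hg : StronglyMeasurable[m] g) (hgh : Integrable (g * h) μ) (hh : Integrable h μ) :
    ∫ ω, g ω * μ[h | m] ω ∂μ = ∫ ω, g ω * h ω ∂μ :=
  (integral_congr_ae (condExp_mul_of_stronglyMeasurable_left hg hgh hh).symm).trans
    (integral_condExp hm)

instance : OrderClosedTopology Bool := ⟨isClosed_discrete _⟩

namespace Holley

variable {Z : Type*}

noncomputable def coordIndicator (e : Z) : (Z → Bool) → ℝ :=
  {A | A e = true}.indicator fun _ ↦ 1

lemma measurableSet_apply_eq_true (e : Z) : MeasurableSet {A : Z → Bool | A e = true} :=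
  measurableSet_eq_fun (measurable_pi_apply e) measurable_const

lemma measurable_coordIndicator (e : Z) : Measurable (coordIndicator e) :=
  measurable_const.indicator (measurableSet_apply_eq_true e)

lemma integrable_coordIndicator (μ : Measure (Z → Bool)) [IsFiniteMeasure μ] (e : Z) :
    Integrable (coordIndicator e) μ :=
  .of_bound (measurable_coordIndicator e).aestronglyMeasurable 1 (ae_of_all _ fun A ↦ by
    by_cases hA : A e = true <;> simp [coordIndicator, hA])

lemma coordsExcept_le (e : Z) : coordsExcept Z e ≤ MeasurableSpace.pi :=
  (measurable_pi_lambda (fun (A : Z → Bool) (e' : {e' // e' ≠ e}) ↦ A e')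
    fun _ ↦ measurable_pi_apply _).comap_le

lemma measurable_update_coordsExcept [DecidableEq Z] (e : Z) (b : Bool) :
    Measurable[coordsExcept Z e] (update · e b) := by
  refine @measurable_pi_lambda _ _ _ (coordsExcept Z e) _ _ fun e' ↦ ?_
  by_cases he' : e' = e
  · subst he'
    simp only [update_self]
    exact measurable_const
  · simp only [update_of_ne he']
    exact (measurable_pi_apply (X := fun _ : {x // x ≠ e} ↦ Bool) ⟨e', he'⟩).comp
      (Measurable.of_comap_le le_rfl)

lemma coordsExcept_eq_iSup (e : Z) : coordsExcept Z e =
    ⨆ e' ∈ ({e}ᶜ : Set Z), MeasurableSpace.comap (fun A : Z → Bool ↦ A e') inferInstance := by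
  rw [coordsExcept, MeasurableSpace.pi, MeasurableSpace.comap_iSup, iSup_subtype']
  simp only [MeasurableSpace.comap_comp]
  rfl

lemma indep_comap_eval_coordsExcept {ν : Measure (Z → Bool)} [IsProbabilityMeasure ν]
    (hν : iIndepFun (fun e A ↦ A e) ν) (e : Z) :
    Indep (MeasurableSpace.comap (fun A : Z → Bool ↦ A e) inferInstance)
      (coordsExcept Z e) ν := by
  have h := indep_biSup_compl (fun e' ↦ (measurable_pi_apply e').comap_le) hν.iIndep {e}
  rwa [iSup_singleton, ← coordsExcept_eq_iSup] at h

lemma condExp_coordIndicator_of_iIndepFun {ν : Measure (Z → Bool)} [IsProbabilityMeasure ν]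
    (hν : iIndepFun (fun e A ↦ A e) ν) (e : Z) :
    ν[coordIndicator e | coordsExcept Z e] =ᵐ[ν] fun _ ↦ ν.real {A | A e = true} := by
  have hsm : StronglyMeasurable[MeasurableSpace.comap (fun A : Z → Bool ↦ A e) inferInstance]
      (coordIndicator e) :=
    stronglyMeasurable_const.indicator ⟨{true}, trivial, rfl⟩
  filter_upwards [condExp_indep_eq (measurable_pi_apply e).comap_le (coordsExcept_le e) hsm
    (indep_comap_eval_coordsExcept hν e)] with A hA
  rw [hA, coordIndicator, integral_indicator_const _ (measurableSet_apply_eq_true e), smul_eq_mul,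
    mul_one]

section Resampling

variable [DecidableEq Z]

def resample (e : Z) (p : ℝ) (f : (Z → Bool) → ℝ) (A : Z → Bool) : ℝ :=
  (1 - p) * f (update A e false) + p * f (update A e true)

section Resample

variable {e : Z} {p : ℝ} {f : (Z → Bool) → ℝ}

lemma measurable_resample (hf : Measurable f) : Measurable (resample e p f) :=
  ((hf.comp measurable_update_left).const_mul _).add
    ((hf.comp measurable_update_left).const_mul _)

lemma monotone_resample (hp₀ : 0 ≤ p) (hp₁ : p ≤ 1) (hf : Monotone f) :
    Monotone (resample e p f) := fun A B hAB ↦ by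
  have (b : Bool) : f (update A e b) ≤ f (update B e b) :=
    hf (update_le_update_iff.mpr ⟨le_rfl, fun j _ ↦ hAB j⟩)
  exact add_le_add (mul_le_mul_of_nonneg_left (this false) (sub_nonneg.mpr hp₁))
    (mul_le_mul_of_nonneg_left (this true) hp₀)

lemma abs_resample_le (hp₀ : 0 ≤ p) (hp₁ : p ≤ 1) {C : ℝ} (hb : ∀ A, |f A| ≤ C)
    (A : Z → Bool) :
    |resample e p f A| ≤ C := by
  have h₀ := abs_le.mp (hb (update A e false))
  have h₁ := abs_le.mp (hb (update A e true))
  rw [abs_le, resample]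
  constructor <;> nlinarith

lemma dependsOn_resample {S : Set Z} (hf : DependsOn f (insert e S)) :
    DependsOn (resample e p f) S := fun A B hAB ↦ by
  have (b : Bool) : f (update A e b) = f (update B e b) := hf fun i hi ↦ by
    rcases eq_or_ne i e with rfl | hie
    · simp
    · simp [update_of_ne hie, hAB i (hi.resolve_left hie)]
  simp only [resample, this]

end Resample

lemma integral_sub_integral_resample (μ : Measure (Z → Bool)) [IsFiniteMeasure μ] (e : Z)
    (p : ℝ) {f : (Z → Bool) → ℝ} (hf : Measurable f) {C : ℝ} (hb : ∀ A, |f A| ≤ C) :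
    ∫ A, f A ∂μ - ∫ A, resample e p f A ∂μ =
      ∫ A, (f (update A e true) - f (update A e false)) *
        (μ[coordIndicator e | coordsExcept Z e] A - p) ∂μ := by
  set d := fun A ↦ f (update A e true) - f (update A e false)
  have hd : StronglyMeasurable[coordsExcept Z e] d :=
    ((hf.comp (measurable_update_coordsExcept e true)).sub
      (hf.comp (measurable_update_coordsExcept e false))).stronglyMeasurable
  have hdiff (A : Z → Bool) : f A - resample e p f A = d A * (coordIndicator e A - p) := by
    have hself := update_eq_self e A
    cases hA : A e <;> rw [hA] at hself <;> simp [d, resample, coordIndicator, hA, hself] <;>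
      ring
  have hd_bdd : ∀ᵐ A ∂μ, ‖d A‖ ≤ 2 * C := ae_of_all _ fun A ↦
    (abs_sub _ _).trans (by linarith [hb (update A e true), hb (update A e false)])
  have hd_meas : AEStronglyMeasurable d μ := (hd.mono (coordsExcept_le e)).aestronglyMeasurable
  have hf_int : Integrable f μ := .of_bound hf.aestronglyMeasurable C (ae_of_all _ hb)
  have hupdate_int (b : Bool) : Integrable (fun A ↦ f (update A e b)) μ :=
    .of_bound (hf.comp measurable_update_left).aestronglyMeasurable C (ae_of_all _ fun _ ↦ hb _)
  have hres_int : Integrable (resample e p f) μ :=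
    ((hupdate_int false).const_mul _).add ((hupdate_int true).const_mul _)
  have hind_int : Integrable (coordIndicator e - fun _ ↦ p) μ :=
    (integrable_coordIndicator μ e).sub (integrable_const p)
  calc ∫ A, f A ∂μ - ∫ A, resample e p f A ∂μ
      = ∫ A, d A * (coordIndicator e - fun _ ↦ p : (Z → Bool) → ℝ) A ∂μ := by
        rw [← integral_sub hf_int hres_int]
        simp_rw [hdiff]
        rfl
    _ = ∫ A, d A * μ[coordIndicator e - fun _ ↦ p | coordsExcept Z e] A ∂μ :=
        (integral_mul_condExp_of_stronglyMeasurable (coordsExcept_le e) hd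
          (hind_int.bdd_mul hd_meas hd_bdd) hind_int).symm
    _ = _ := by
        refine integral_congr_ae ?_
        filter_upwards [condExp_sub (integrable_coordIndicator μ e) (integrable_const p)
          (coordsExcept Z e)] with A hA
        rw [hA, Pi.sub_apply, condExp_const (coordsExcept_le e)]

lemma integral_le_integral_resample {μ : Measure (Z → Bool)} [IsFiniteMeasure μ] {e : Z}
    {p : ℝ} (hcond : ∀ᵐ A ∂μ, μ[coordIndicator e | coordsExcept Z e] A ≤ p)
    {f : (Z → Bool) → ℝ} (hf : Measurable f) (hmono : Monotone f) {C : ℝ}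
    (hb : ∀ A, |f A| ≤ C) :
    ∫ A, f A ∂μ ≤ ∫ A, resample e p f A ∂μ := by
  have hdiff := integral_sub_integral_resample μ e p hf hb
  have : ∫ A, (f (update A e true) - f (update A e false)) *
      (μ[coordIndicator e | coordsExcept Z e] A - p) ∂μ ≤ 0 :=
    integral_nonpos_of_ae (hcond.mono fun A hA ↦ mul_nonpos_of_nonneg_of_nonpos
      (sub_nonneg.mpr (hmono (update_le_update_iff'.mpr (Bool.false_le _))))
      (sub_nonpos.mpr hA))
  linarith

lemma integral_resample_of_iIndepFun {ν : Measure (Z → Bool)} [IsProbabilityMeasure ν]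
    (hν : iIndepFun (fun e A ↦ A e) ν) (e : Z) {f : (Z → Bool) → ℝ} (hf : Measurable f)
    {C : ℝ} (hb : ∀ A, |f A| ≤ C) :
    ∫ A, resample e (ν.real {A | A e = true}) f A ∂ν = ∫ A, f A ∂ν := by
  have hdiff := integral_sub_integral_resample ν e (ν.real {A | A e = true}) hf hb
  have : ∫ A, (f (update A e true) - f (update A e false)) *
      (ν[coordIndicator e | coordsExcept Z e] A - ν.real {A | A e = true}) ∂ν = 0 :=
    integral_eq_zero_of_ae ((condExp_coordIndicator_of_iIndepFun hν e).mono fun A hA ↦ by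
      simp [hA])
  linarith

end Resampling

section Domination

variable {μ ν : Measure (Z → Bool)} [IsProbabilityMeasure μ] [IsProbabilityMeasure ν]

theorem integral_le_integral_of_dependsOn (hν : iIndepFun (fun e A ↦ A e) ν)
    (hcond : ∀ e, ∀ᵐ A ∂μ,
      μ[coordIndicator e | coordsExcept Z e] A ≤ ν.real {A | A e = true})
    (S : Finset Z) {f : (Z → Bool) → ℝ} (hf : Measurable f) (hmono : Monotone f) {C : ℝ}
    (hb : ∀ A, |f A| ≤ C) (hS : DependsOn f S) :
    ∫ A, f A ∂μ ≤ ∫ A, f A ∂ν := by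
  classical
  induction S using Finset.induction_on generalizing f with
  | empty =>
    have hconst : f = fun _ ↦ f ⊥ := funext fun A ↦ (Finset.coe_empty ▸ hS).empty A ⊥
    rw [hconst]
    simp
  | insert e S _ ih =>
    have hp₀ : 0 ≤ ν.real {A | A e = true} := measureReal_nonneg
    have hp₁ : ν.real {A | A e = true} ≤ 1 := measureReal_le_one
    calc ∫ A, f A ∂μ ≤ ∫ A, resample e (ν.real {A | A e = true}) f A ∂μ :=
          integral_le_integral_resample (hcond e) hf hmono hb
      _ ≤ ∫ A, resample e (ν.real {A | A e = true}) f A ∂ν :=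
          ih (measurable_resample hf) (monotone_resample hp₀ hp₁ hmono)
            (abs_resample_le hp₀ hp₁ hb) (dependsOn_resample (by simpa using hS))
      _ = ∫ A, f A ∂ν := integral_resample_of_iIndepFun hν e hf hb

theorem measure_le_of_isUpperSet_of_dependsOn (hν : iIndepFun (fun e A ↦ A e) ν)
    (hcond : ∀ e, ∀ᵐ A ∂μ,
      μ[coordIndicator e | coordsExcept Z e] A ≤ ν.real {A | A e = true})
    (S : Finset Z) {U : Set (Z → Bool)} (hU : MeasurableSet U) (hUu : IsUpperSet U)
    (hS : DependsOn (· ∈ U) S) :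
    μ U ≤ ν U := by
  classical
  have h := integral_le_integral_of_dependsOn hν hcond S (f := U.indicator 1)
    (measurable_one.indicator hU) hUu.monotone_indicator_one (C := 1)
    (fun A ↦ by by_cases hA : A ∈ U <;> simp [hA])
    (fun A B hAB ↦ by
      simp only [indicator_apply, Pi.one_apply, show (A ∈ U) = (B ∈ U) from hS hAB])
  rwa [integral_indicator_one hU, integral_indicator_one hU, measureReal_def, measureReal_def,
    ENNReal.toReal_le_toReal (measure_ne_top _ _) (measure_ne_top _ _)] at h

theorem measure_le_of_isClosed_isUpperSet [Countable Z] (hν : iIndepFun (fun e A ↦ A e) ν)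
    (hcond : ∀ e, ∀ᵐ A ∂μ,
      μ[coordIndicator e | coordsExcept Z e] A ≤ ν.real {A | A e = true})
    {K : Set (Z → Bool)} (hK : IsClosed K) (hKu : IsUpperSet K) :
    μ K ≤ ν K := by
  classical
  set fill : Finset Z → (Z → Bool) → Z → Bool := fun S A ↦ S.piecewise A ⊤
  have hfill_meas (S : Finset Z) : Measurable (fill S) := measurable_pi_lambda _ fun e ↦ by
    by_cases he : e ∈ S <;> simp [fill, he, measurable_pi_apply, measurable_const]
  have hfill_mono (S : Finset Z) : Monotone (fill S) := fun A B hAB ↦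
    S.piecewise_le_piecewise hAB le_rfl
  have hmeas (S : Finset Z) : MeasurableSet (fill S ⁻¹' K) :=
    hfill_meas S hK.measurableSet
  have hK_sub (S : Finset Z) : K ⊆ fill S ⁻¹' K := fun A hA ↦
    hKu (S.le_piecewise_of_le_of_le le_rfl le_top) hA
  have hcyl (S : Finset Z) : μ (fill S ⁻¹' K) ≤ ν (fill S ⁻¹' K) :=
    measure_le_of_isUpperSet_of_dependsOn hν hcond S (hmeas S)
      (fun A B hAB hA ↦ hKu (hfill_mono S hAB) hA)
      (fun A B hAB ↦ by simp only [mem_preimage, fill, S.piecewise_congr hAB fun _ _ ↦ rfl])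
  have hlim : Tendsto (fun S ↦ ν (fill S ⁻¹' K)) atTop (𝓝 (ν K)) := by
    refine tendsto_measure_of_tendsto_indicator_of_isFiniteMeasure atTop ν hmeas fun A ↦ ?_
    by_cases hA : A ∈ K
    · exact Eventually.of_forall fun S ↦ iff_of_true (hK_sub S hA) hA
    · filter_upwards [Finset.tendsto_piecewise_atTop A ⊤ (hK.isOpen_compl.mem_nhds hA)] with S hS
      exact iff_of_false hS hA
  exact ge_of_tendsto hlim (Eventually.of_forall fun S ↦ (measure_mono (hK_sub S)).trans (hcyl S))

end Domination

end Holley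

theorem stmt_0_general {Z : Type*} [Countable Z] (ε : Z → ℝ)
    (μ ν : Measure (Z → Bool)) [IsProbabilityMeasure μ] [IsProbabilityMeasure ν]
    (hν_indep : ProbabilityTheory.iIndepFun
      (fun (e : Z) (A : Z → Bool) => A e) ν)
    (hν_marginal : ∀ e : Z, ν {A | A e = true} = ENNReal.ofReal (ε e))
    (hcond : ∀ e : Z, ∀ᵐ A ∂μ,
      (μ[Set.indicator {A : Z → Bool | A e = true} (fun _ => (1 : ℝ)) |
        coordsExcept Z e]) A ≤ ε e)
    (f : (Z → Bool) → ℝ) (hf_meas : Measurable f) (hf_bdd : ∃ C : ℝ, ∀ A, |f A| ≤ C)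
    (hf_mono : Monotone f) :
    ∫ A, f A ∂μ ≤ ∫ A, f A ∂ν := by
  have hcond_le_marginal (e : Z) : ∀ᵐ A ∂μ,
      μ[Holley.coordIndicator e | coordsExcept Z e] A ≤ ν.real {A | A e = true} :=
    (hcond e).mono fun A hA ↦ hA.trans <| by
      rw [measureReal_def, hν_marginal, ENNReal.toReal_ofReal']
      exact le_max_left _ _
  obtain ⟨C, hC⟩ := hf_bdd
  refine integral_le_integral_of_forall_isUpperSet (fun U hU hUu ↦ ?_) hf_meas hf_mono hC
  exact measure_le_of_forall_isClosed_isUpperSet (fun K hK hKu ↦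
    Holley.measure_le_of_isClosed_isUpperSet hν_indep hcond_le_marginal hK hKu) hU hUu

/-- Holley-type stochastic domination: let `Z` be countable, `ε_e ∈ (0,1]`, and let `ν`
be the product Bernoulli measure on `{0,1}^Z` (coordinates independent, coordinate `e`
equal to `1` with probability `ε_e`). If `μ` is a probability measure on `{0,1}^Z` such
that for every `e` the conditional probability of `{A : A(e) = 1}` given the σ-algebra
generated by the other coordinates is a.s. at most `ε_e`, then `μ` is stochastically
dominated by `ν`: `∫ f dμ ≤ ∫ f dν` for every bounded measurable monotone `f`. -/
theorem stmt_0 {Z : Type*} [Countable Z] (ε : Z → ℝ) (hε : ∀ e, 0 < ε e ∧ ε e ≤ 1)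
    (μ ν : Measure (Z → Bool)) [IsProbabilityMeasure μ] [IsProbabilityMeasure ν]
    (hν_indep : ProbabilityTheory.iIndepFun
      (fun (e : Z) (A : Z → Bool) => A e) ν)
    (hν_marginal : ∀ e : Z, ν {A | A e = true} = ENNReal.ofReal (ε e))
    (hcond : ∀ e : Z, ∀ᵐ A ∂μ,
      (μ[Set.indicator {A : Z → Bool | A e = true} (fun _ => (1 : ℝ)) |
        coordsExcept Z e]) A ≤ ε e)
    (f : (Z → Bool) → ℝ) (hf_meas : Measurable f) (hf_bdd : ∃ C : ℝ, ∀ A, |f A| ≤ C)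
    (hf_mono : Monotone f) :
    ∫ A, f A ∂μ ≤ ∫ A, f A ∂ν :=
  stmt_0_general ε μ ν hν_indep hν_marginal hcond f hf_meas hf_bdd hf_mono
end

section
/- Let E be a compact topological space on which the circle group S¹ acts continuously, and let V : E × E → ℝ be continuous, symmetric (V(a,b) = V(b,a) for all a,b ∈ E) and S¹-invariant (V(τ·a, τ·b) = V(a,b) for all τ ∈ S¹ and a,b ∈ E). Then for every ε > 0 there is a decomposition V = V̄ − v into functions V̄, v : E × E → ℝ such that: 0 < v(a,b) < ε for all a,b ∈ E; V̄ is symmetric and S¹-invariant; and for all a,b ∈ E the map t ↦ V̄(a, exp(i t)·b) from ℝ to ℝ is twice continuously differentiable, with its second derivative bounded by a constant that is uniform in a and b. -/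
open MeasureTheory Convolution Function

lemma conv_bound (φ g : ℝ → ℝ) (hφc : HasCompactSupport φ) (hφ : ContDiff ℝ 3 φ)
    (hg : Continuous g) (C : ℝ) (hgC : ∀ t, |g t| ≤ C) :
    ContDiff ℝ 2 (φ ⋆[ContinuousLinearMap.mul ℝ ℝ] g) ∧
    ∀ t, |iteratedDeriv 2 (φ ⋆[ContinuousLinearMap.mul ℝ ℝ] g) t|
      ≤ (∫ s, |deriv (deriv φ) s|) * C := by
  have hgl : LocallyIntegrable g := hg.locallyIntegrable
  have h23 : (2:WithTop ℕ∞) ≤ 3 := by norm_num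
  constructor
  · exact hφc.contDiff_convolution_left _ (hφ.of_le h23) hgl
  · intro t
    have hφ' : ContDiff ℝ 2 (deriv φ) := by
      have := hφ.iterate_deriv' 2 1; simpa using this
    have hφ'' : ContDiff ℝ 1 (deriv (deriv φ)) := by
      have := hφ.iterate_deriv' 1 2
      simpa [Function.iterate_succ, Function.comp] using this
    have hφ'c : HasCompactSupport (deriv φ) := hφc.deriv
    have hφ''c : HasCompactSupport (deriv (deriv φ)) := hφ'c.deriv
    have h1 : deriv (φ ⋆[ContinuousLinearMap.mul ℝ ℝ] g)
        = (deriv φ ⋆[ContinuousLinearMap.mul ℝ ℝ] g) := by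
      funext x
      exact (hφc.hasDerivAt_convolution_left _ (hφ.of_le (by norm_num)) hgl x).deriv
    have h2 : deriv (deriv φ ⋆[ContinuousLinearMap.mul ℝ ℝ] g)
        = (deriv (deriv φ) ⋆[ContinuousLinearMap.mul ℝ ℝ] g) := by
      funext x
      exact (hφ'c.hasDerivAt_convolution_left _ (hφ'.of_le (by norm_num)) hgl x).deriv
    have h3 : iteratedDeriv 2 (φ ⋆[ContinuousLinearMap.mul ℝ ℝ] g) t
        = (deriv (deriv φ) ⋆[ContinuousLinearMap.mul ℝ ℝ] g) t := by
      rw [iteratedDeriv_succ, iteratedDeriv_one, h1, h2]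
    rw [h3, convolution_def]
    have hC : 0 ≤ C := le_trans (abs_nonneg _) (hgC 0)
    have hint : Integrable (fun s => (ContinuousLinearMap.mul ℝ ℝ) (deriv (deriv φ) s) (g (t - s))) := by
      apply Continuous.integrable_of_hasCompactSupport
      · exact (hφ''.continuous).mul (hg.comp (continuous_const.sub continuous_id))
      · apply HasCompactSupport.mul_right hφ''c
    calc |∫ s, (ContinuousLinearMap.mul ℝ ℝ) (deriv (deriv φ) s) (g (t - s))|
        ≤ ∫ s, |deriv (deriv φ) s| * |g (t - s)| :=
          by
            have := norm_integral_le_integral_norm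
              (fun s => (ContinuousLinearMap.mul ℝ ℝ) (deriv (deriv φ) s) (g (t - s))) (μ := volume)
            simpa [Real.norm_eq_abs, abs_mul] using this
      _ ≤ ∫ s, |deriv (deriv φ) s| * C := by
          apply integral_mono (by simpa [abs_mul] using hint.abs) ((hφ''.continuous.integrable_of_hasCompactSupport hφ''c).abs.mul_const C)
          intro s
          exact mul_le_mul_of_nonneg_left (hgC _) (abs_nonneg _)
      _ = (∫ s, |deriv (deriv φ) s|) * C := integral_mul_const _ _

/-- Let `E` be a compact topological space on which the circle group `S¹` acts
continuously, and let `V : E × E → ℝ` be continuous, symmetric and `S¹`-invariant.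
Then for every `ε > 0` there is a decomposition `V = V̄ - v` with `0 < v < ε`
pointwise, `V̄` symmetric and `S¹`-invariant, and such that for all `a, b ∈ E` the map
`t ↦ V̄(a, exp(i t)·b)` is twice continuously differentiable with second derivative
bounded uniformly in `a` and `b`. -/
theorem stmt_1 (E : Type*) [TopologicalSpace E] [CompactSpace E]
    [MulAction Circle E] [ContinuousSMul Circle E]
    (V : E × E → ℝ) (hVcont : Continuous V)
    (hVsymm : ∀ a b : E, V (a, b) = V (b, a))
    (hVinv : ∀ (τ : Circle) (a b : E), V (τ • a, τ • b) = V (a, b))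
    (ε : ℝ) (hε : 0 < ε) :
    ∃ Vbar v : E × E → ℝ,
      (∀ p : E × E, V p = Vbar p - v p) ∧
      (∀ p : E × E, 0 < v p ∧ v p < ε) ∧
      (∀ a b : E, Vbar (a, b) = Vbar (b, a)) ∧
      (∀ (τ : Circle) (a b : E), Vbar (τ • a, τ • b) = Vbar (a, b)) ∧
      (∀ a b : E, ContDiff ℝ 2 (fun t : ℝ => Vbar (a, Circle.exp t • b))) ∧
      (∃ M : ℝ, ∀ (a b : E) (t : ℝ),
        |iteratedDeriv 2 (fun t : ℝ => Vbar (a, Circle.exp t • b)) t| ≤ M) := by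
  -- bound on V
  obtain ⟨C, hC⟩ : ∃ C : ℝ, ∀ p : E × E, |V p| ≤ C := by
    obtain ⟨C, hC⟩ := isCompact_univ.exists_bound_of_continuousOn hVcont.continuousOn
    exact ⟨C, fun p => by simpa [Real.norm_eq_abs] using hC p (Set.mem_univ p)⟩
  -- continuity of the orbit map
  have horb : Continuous fun q : ℝ × (E × E) => V (q.2.1, Circle.exp q.1 • q.2.2) :=
    hVcont.comp ((continuous_fst.comp continuous_snd).prodMk
      ((Circle.exp.continuous.comp continuous_fst).smul (continuous_snd.comp continuous_snd)))
  -- tube lemma: uniform smallness of oscillation along the action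
  obtain ⟨δ, hδpos, hδ⟩ : ∃ δ > (0:ℝ), ∀ t : ℝ, |t| < δ → ∀ a b : E,
      |V (a, Circle.exp t • b) - V (a, b)| ≤ ε / 4 := by
    set u := {q : ℝ × (E × E) | |V (q.2.1, Circle.exp q.1 • q.2.2) - V q.2| < ε / 4} with hu_def
    have hu : IsOpen u := by
      have : u = (fun q : ℝ × (E × E) => |V (q.2.1, Circle.exp q.1 • q.2.2) - V q.2|) ⁻¹'
          Set.Iio (ε / 4) := rfl
      rw [this]
      exact (isOpen_Iio).preimage ((horb.sub (hVcont.comp continuous_snd)).abs)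
    have hsub : ({(0:ℝ)} ×ˢ (Set.univ : Set (E × E))) ⊆ u := by
      rintro ⟨t, p⟩ ⟨ht, -⟩
      simp only [Set.mem_singleton_iff] at ht
      subst ht
      simp only [hu_def, Set.mem_setOf_eq, Circle.exp_zero, one_smul]
      simp only [sub_self, abs_zero]
      positivity
    obtain ⟨v, w, hv, hw, h0v, hwu, hvw⟩ :=
      generalized_tube_lemma isCompact_singleton isCompact_univ hu hsub
    obtain ⟨δ, hδpos, hball⟩ := Metric.isOpen_iff.mp hv 0 (h0v rfl)
    refine ⟨δ, hδpos, fun t ht a b => ?_⟩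
    have : (t, (a, b)) ∈ u := hvw ⟨hball (by simpa [Real.dist_eq] using ht), hwu (Set.mem_univ _)⟩
    exact le_of_lt this
  -- the bump function
  set φb : ContDiffBump (0:ℝ) := ⟨δ/2, δ, by positivity, by linarith⟩ with hφb_def
  set φ : ℝ → ℝ := φb.normed volume with hφ_def
  have hφc : HasCompactSupport φ := φb.hasCompactSupport_normed
  have hφ3 : ContDiff ℝ 3 φ := by exact_mod_cast φb.contDiff_normed (n := 3)
  have hφnonneg : ∀ t, 0 ≤ φ t := φb.nonneg_normed
  have hφint : ∫ t, φ t = 1 := φb.integral_normed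
  have hφneg : ∀ t, φ (-t) = φ t := fun t => φb.normed_neg t
  have hφintg : Integrable φ := φb.integrable_normed
  have hφsupp : ∀ t : ℝ, φ t ≠ 0 → |t| < δ := by
    intro t ht
    have : t ∈ Function.support φ := ht
    rw [φb.support_normed_eq] at this
    simpa [Real.dist_eq] using Metric.mem_ball.mp this
  -- the orbit functions
  set g : E → E → ℝ → ℝ := fun a b t => V (a, Circle.exp t • b) with hg_def
  have hgcont : ∀ a b, Continuous (g a b) := fun a b =>
    hVcont.comp (continuous_const.prodMk
      ((Circle.exp.continuous).smul continuous_const))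
  have hgC : ∀ a b t, |g a b t| ≤ C := fun a b t => hC _
  -- the smoothed kernel
  set Vbar0 : E × E → ℝ := fun p => ∫ t, φ t * V (p.1, Circle.exp t • p.2) with hVbar0_def
  -- pointwise identification with a convolution
  have key : ∀ a b s, Vbar0 (a, Circle.exp s • b) = (φ ⋆[ContinuousLinearMap.mul ℝ ℝ] g a b) s := by
    intro a b s
    have e1 : Vbar0 (a, Circle.exp s • b) = ∫ t, φ t * g a b (t + s) := by
      simp only [hVbar0_def]
      congr 1
      funext t
      rw [hg_def]
      simp only
      rw [← mul_smul, ← Circle.exp_add]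
    rw [e1, convolution_def]
    have e2 : ∫ t, φ t * g a b (t + s) = ∫ t, φ (-t) * g a b (-t + s) :=
      (integral_neg_eq_self (fun t => φ t * g a b (t + s)) volume).symm
    rw [e2]
    congr 1
    funext t
    rw [hφneg]
    simp only [ContinuousLinearMap.mul_apply']
    congr 1
    ring_nf
  -- symmetry
  have hsymm0 : ∀ a b : E, Vbar0 (a, b) = Vbar0 (b, a) := by
    intro a b
    have hpt : ∀ t : ℝ, V (b, Circle.exp t • a) = V (a, Circle.exp (-t) • b) := by
      intro t
      have h1 : V (b, Circle.exp t • a)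
          = V (Circle.exp (-t) • b, Circle.exp (-t) • (Circle.exp t • a)) :=
        (hVinv (Circle.exp (-t)) b (Circle.exp t • a)).symm
      have h2 : Circle.exp (-t) • (Circle.exp t • a) = a := by
        rw [← mul_smul, ← Circle.exp_add]
        simp [Circle.exp_zero]
      rw [h1, h2, hVsymm]
    calc Vbar0 (a, b) = ∫ t, φ t * V (a, Circle.exp t • b) := rfl
      _ = ∫ t, φ (-t) * V (a, Circle.exp (- -t) • b) := by
          simp only [hφneg, neg_neg]
      _ = ∫ t, φ t * V (a, Circle.exp (-t) • b) :=
          integral_neg_eq_self (fun t => φ t * V (a, Circle.exp (-t) • b)) volume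
      _ = ∫ t, φ t * V (b, Circle.exp t • a) := by
          congr 1; funext t; rw [hpt]
      _ = Vbar0 (b, a) := rfl
  -- invariance
  have hinv0 : ∀ (τ : Circle) (a b : E), Vbar0 (τ • a, τ • b) = Vbar0 (a, b) := by
    intro τ a b
    simp only [hVbar0_def]
    congr 1; funext t
    have : Circle.exp t • (τ • b) = τ • (Circle.exp t • b) := by
      rw [← mul_smul, mul_comm, mul_smul]
    rw [this, hVinv]
  -- closeness
  have hclose : ∀ p : E × E, |Vbar0 p - V p| ≤ ε / 4 := by
    intro p
    have hint1 : Integrable (fun t => φ t * g p.1 p.2 t) := by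
      apply Continuous.integrable_of_hasCompactSupport
      · exact (φb.continuous_normed).mul (hgcont p.1 p.2)
      · exact hφc.mul_right
    have hint2 : Integrable (fun t => φ t * V p) := hφintg.mul_const _
    have e1 : Vbar0 p - V p = ∫ t, (φ t * g p.1 p.2 t - φ t * V p) := by
      rw [integral_sub hint1 hint2, integral_mul_const, hφint, one_mul]
    rw [e1]
    have hbnd : ∀ t, |φ t * g p.1 p.2 t - φ t * V p| ≤ φ t * (ε / 4) := by
      intro t
      rw [← mul_sub, abs_mul, abs_of_nonneg (hφnonneg t)]
      by_cases h : φ t = 0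
      · simp [h]
      · have := hδ t (hφsupp t h) p.1 p.2
        exact mul_le_mul_of_nonneg_left this (hφnonneg t)
    calc |∫ t, (φ t * g p.1 p.2 t - φ t * V p)|
        ≤ ∫ t, |φ t * g p.1 p.2 t - φ t * V p| := by
          have := norm_integral_le_integral_norm
            (fun t => φ t * g p.1 p.2 t - φ t * V p) (μ := volume)
          simpa [Real.norm_eq_abs] using this
      _ ≤ ∫ t, φ t * (ε / 4) := integral_mono (hint1.sub hint2).abs (hφintg.mul_const _) hbnd
      _ = ε / 4 := by rw [integral_mul_const, hφint, one_mul]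
  -- assemble
  refine ⟨fun p => Vbar0 p + ε / 2, fun p => Vbar0 p + ε / 2 - V p, fun p => by ring,
    fun p => ?_, fun a b => by show Vbar0 (a, b) + ε / 2 = Vbar0 (b, a) + ε / 2; rw [hsymm0 a b], fun τ a b => by show Vbar0 (τ • a, τ • b) + ε / 2 = Vbar0 (a, b) + ε / 2; rw [hinv0 τ a b], fun a b => ?_, ?_⟩
  · have := abs_le.mp (hclose p)
    constructor <;> [linarith [this.1]; linarith [this.2]]
  · have heq : (fun t : ℝ => Vbar0 (a, Circle.exp t • b) + ε / 2)
        = fun t => (φ ⋆[ContinuousLinearMap.mul ℝ ℝ] g a b) t + ε / 2 := by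
      funext t; rw [key]
    rw [heq]
    exact ((conv_bound φ (g a b) hφc hφ3 (hgcont a b) C (hgC a b)).1).add contDiff_const
  · refine ⟨(∫ s, |deriv (deriv φ) s|) * C, fun a b t => ?_⟩
    have heq : (fun t : ℝ => Vbar0 (a, Circle.exp t • b) + ε / 2)
        = fun t => (φ ⋆[ContinuousLinearMap.mul ℝ ℝ] g a b) t + ε / 2 := by
      funext t; rw [key]
    rw [heq]
    have hid : iteratedDeriv 2 (fun t => (φ ⋆[ContinuousLinearMap.mul ℝ ℝ] g a b) t + ε / 2) t
        = iteratedDeriv 2 (φ ⋆[ContinuousLinearMap.mul ℝ ℝ] g a b) t := by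
      rw [iteratedDeriv_succ, iteratedDeriv_one, iteratedDeriv_succ, iteratedDeriv_one]
      congr 1
      funext x
      exact deriv_add_const _
    rw [hid]
    exact (conv_bound φ (g a b) hφc hφ3 (hgcont a b) C (hgC a b)).2 t
end

section
/- Fix τ ∈ (0,π) and integers R ≥ 2 and n > R, and define τ_n : ℝ² → ℝ by τ_n(x) := τ·r(‖x‖−R, n−R). Then: (i) for all x, x' ∈ ℝ² with ‖x'‖ ≥ ‖x‖ one has 0 ≤ τ_n(x) − τ_n(x') ≤ τ·‖x−x'‖·q(‖x‖−R)/Q(n−R); (ii) Q(n) → ∞ as n → ∞; (iii) τ_n(x) = τ whenever ‖x‖ ≤ R, and τ_n(x) = 0 whenever ‖x‖ ≥ n. -/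
/-!
Since `q > 0`, the primitive `Q` is increasing, and for `0 < k` the profile is
`r(s, k) = (Q k - Q (min (max s 0) k)) / Q k`: a decreasing function of `s` equal to `1` for
`s ≤ 0` and to `0` for `s ≥ k`. As `q` is antitone, `Q` grows on `[s, s']` by at most
`(s' - s) q(s)`, and clamping `s` to `[0, k]` is `1`-Lipschitz, which gives the Lipschitz-type
bound for `τ_n` through `‖x'‖ - ‖x‖ ≤ ‖x - x'‖`. Finally `Q` diverges because
`log ∘ log` is a primitive of `q` on `[3, ∞)`.
-/

/-- `q(s) = 1` for `s ≤ 2`, and `q(s) = 1/(s·log s)` for `s > 2`. -/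
noncomputable def q (s : ℝ) : ℝ := if s ≤ 2 then 1 else 1 / (s * Real.log s)

/-- `Q(k) = ∫_0^k q(s) ds`. -/
noncomputable def Q (k : ℝ) : ℝ := ∫ s in (0:ℝ)..k, q s

/-- `r(s,k) = 1` if `s ≤ 0`, `r(s,k) = ∫_s^k (q(s')/Q(k)) ds'` if `0 < s < k`,
and `r(s,k) = 0` if `s ≥ k`. -/
noncomputable def r (s k : ℝ) : ℝ :=
  if s ≤ 0 then 1 else if s < k then ∫ s' in s..k, q s' / Q k else 0

/-- The deformation `τ_n(x) := τ · r(‖x‖ - R, n - R)` on the plane `ℝ²` with the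
maximum norm. -/
noncomputable def tauN (τ : ℝ) (R n : ℤ) (x : Fin 2 → ℝ) : ℝ :=
  τ * r (‖x‖ - (R : ℝ)) ((n : ℝ) - (R : ℝ))

open Real Filter

lemma q_pos (s : ℝ) : 0 < q s := by
  unfold q
  split_ifs with h
  · exact one_pos
  · have hlog : 0 < log s := log_pos (by linarith)
    have hs : 0 < s := by linarith
    positivity

lemma one_le_mul_log_of_two_le {s : ℝ} (h : 2 ≤ s) : 1 ≤ s * log s := by
  have hlog2 : 0 < log 2 := log_pos one_lt_two
  -- `e < 4`, so `1 ≤ log 4 = 2 log 2`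
  have hlog4 : 1 ≤ 2 * log 2 := by
    rw [← log_rpow two_pos, le_log_iff_exp_le (by positivity)]
    exact exp_one_lt_d9.le.trans (by norm_num)
  calc 1 ≤ 2 * log 2 := hlog4
    _ ≤ s * log s := mul_le_mul h (log_le_log two_pos h) hlog2.le (by linarith)

lemma q_le_one (s : ℝ) : q s ≤ 1 := by
  unfold q
  split_ifs with h
  · exact le_rfl
  · exact div_le_one_of_le₀ (one_le_mul_log_of_two_le (by linarith))
      (by linarith [one_le_mul_log_of_two_le (s := s) (by linarith)])

lemma antitone_q : Antitone q := by
  intro a b hab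
  by_cases ha : a ≤ 2
  · rw [show q a = 1 from if_pos ha]
    exact q_le_one b
  · have hb : ¬ b ≤ 2 := fun hb => ha (hab.trans hb)
    rw [not_le] at ha
    have ha1 := one_le_mul_log_of_two_le ha.le
    unfold q
    rw [if_neg (not_le.2 ha), if_neg hb]
    exact one_div_le_one_div_of_le (by linarith) <|
      mul_le_mul hab (log_le_log (by linarith) hab) (log_pos (by linarith)).le (by linarith)

lemma intervalIntegrable_q (a b : ℝ) : IntervalIntegrable q MeasureTheory.volume a b :=
  antitone_q.intervalIntegrable

lemma Q_sub_Q (a b : ℝ) : Q b - Q a = ∫ s in a..b, q s := by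
  rw [Q, Q, sub_eq_iff_eq_add', intervalIntegral.integral_add_adjacent_intervals
    (intervalIntegrable_q 0 a) (intervalIntegrable_q a b)]

lemma Q_zero : Q 0 = 0 := intervalIntegral.integral_same

lemma Q_pos {k : ℝ} (hk : 0 < k) : 0 < Q k :=
  intervalIntegral.intervalIntegral_pos_of_pos_on (intervalIntegrable_q 0 k)
    (fun t _ => q_pos t) hk

lemma monotone_Q : Monotone Q := fun a b hab => by
  rw [← sub_nonneg, Q_sub_Q]
  exact intervalIntegral.integral_nonneg hab fun t _ => (q_pos t).le

lemma Q_sub_Q_le {a b : ℝ} (hab : a ≤ b) : Q b - Q a ≤ (b - a) * q a := by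
  rw [Q_sub_Q, ← smul_eq_mul, ← intervalIntegral.integral_const]
  exact intervalIntegral.integral_mono_on hab (intervalIntegrable_q a b) intervalIntegrable_const
    fun t ht => antitone_q ht.1

lemma r_eq_div {k : ℝ} (hk : 0 < k) (s : ℝ) :
    r s k = (Q k - Q (min (max s 0) k)) / Q k := by
  unfold r
  rcases le_or_gt s 0 with hs | hs
  · rw [if_pos hs, max_eq_right hs, min_eq_left hk.le, Q_zero, sub_zero,
      div_self (Q_pos hk).ne']
  · rw [if_neg (not_le.2 hs), max_eq_left hs.le]
    rcases lt_or_ge s k with hsk | hsk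
    · rw [if_pos hsk, min_eq_left hsk.le, intervalIntegral.integral_div, Q_sub_Q]
    · rw [if_neg (not_lt.2 hsk), min_eq_right hsk, sub_self, zero_div]

lemma r_of_nonpos {s : ℝ} (hs : s ≤ 0) (k : ℝ) : r s k = 1 := if_pos hs

lemma r_of_le {s k : ℝ} (hk : 0 < k) (hks : k ≤ s) : r s k = 0 := by
  rw [r, if_neg (by linarith), if_neg (not_lt.2 hks)]

lemma min_max_sub_min_max_le {s s' : ℝ} (hss' : s ≤ s') (k : ℝ) :
    min (max s' 0) k - min (max s 0) k ≤ s' - s := by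
  simp only [min_def, max_def]
  split_ifs <;> linarith

lemma antitone_r {k : ℝ} (hk : 0 < k) : Antitone (r · k) := fun s s' hss' => by
  simp only [r_eq_div hk]
  gcongr
  · exact (Q_pos hk).le
  · exact monotone_Q (min_le_min_right k (max_le_max_right 0 hss'))

lemma r_sub_r_le {k s s' : ℝ} (hk : 0 < k) (hss' : s ≤ s') :
    r s k - r s' k ≤ (s' - s) * q s / Q k := by
  rw [r_eq_div hk, r_eq_div hk, ← sub_div, sub_sub_sub_cancel_left]
  refine div_le_div_of_nonneg_right ?_ (Q_pos hk).le
  rcases le_or_gt s k with hsk | hks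
  · set c := min (max s 0) k
    have hsc : s ≤ c := le_min (le_max_left s 0) hsk
    have hcc' : c ≤ min (max s' 0) k := min_le_min_right k (max_le_max_right 0 hss')
    calc Q (min (max s' 0) k) - Q c ≤ (min (max s' 0) k - c) * q c := Q_sub_Q_le hcc'
      _ ≤ (s' - s) * q s :=
        mul_le_mul (min_max_sub_min_max_le hss' k) (antitone_q hsc) (q_pos c).le
          (by linarith)
  · rw [min_eq_right (le_max_of_le_left hks.le),
      min_eq_right (le_max_of_le_left (hks.le.trans hss')), sub_self]
    exact mul_nonneg (by linarith) (q_pos s).le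

lemma log_log_sub_le_Q {k : ℝ} (hk : 3 ≤ k) : log (log k) - log (log 3) ≤ Q k := by
  have hprimitive : ∫ s in (3 : ℝ)..k, q s = log (log k) - log (log 3) := by
    refine intervalIntegral.integral_eq_sub_of_hasDerivAt (f := fun t => log (log t))
      (fun t ht => ?_)
      (intervalIntegrable_q 3 k)
    rw [Set.uIcc_of_le hk] at ht
    have ht0 : 0 < t := by linarith [ht.1]
    have hlog : 0 < log t := log_pos (by linarith [ht.1])
    refine ((hasDerivAt_log hlog.ne').comp t (hasDerivAt_log ht0.ne')).congr_deriv ?_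
    rw [q, if_neg (by linarith [ht.1])]
    field_simp
  have hQ3 : 0 ≤ Q 3 := Q_zero ▸ monotone_Q (by norm_num)
  linarith [Q_sub_Q 3 k]

lemma tendsto_Q_atTop : Tendsto Q atTop atTop := by
  refine tendsto_atTop_mono' _ ?_ <|
    tendsto_atTop_add_const_right _ (-log (log 3)) (tendsto_log_atTop.comp tendsto_log_atTop)
  filter_upwards [eventually_ge_atTop (3 : ℝ)] with k hk
  exact log_log_sub_le_Q hk

theorem stmt_2_general (τ : ℝ) (hτ0 : 0 < τ) (R n : ℤ)
    (hn : R < n) :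
    (∀ x x' : Fin 2 → ℝ, ‖x‖ ≤ ‖x'‖ →
      0 ≤ tauN τ R n x - tauN τ R n x' ∧
      tauN τ R n x - tauN τ R n x' ≤
        τ * ‖x - x'‖ * q (‖x‖ - (R : ℝ)) / Q ((n : ℝ) - (R : ℝ))) ∧
    Filter.Tendsto Q Filter.atTop Filter.atTop ∧
    (∀ x : Fin 2 → ℝ, ‖x‖ ≤ (R : ℝ) → tauN τ R n x = τ) ∧
    (∀ x : Fin 2 → ℝ, (n : ℝ) ≤ ‖x‖ → tauN τ R n x = 0) := by
  have hk : (0 : ℝ) < n - R := sub_pos.2 (Int.cast_lt.2 hn)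
  refine ⟨fun x x' hxx' => ?_, tendsto_Q_atTop, fun x hx => ?_, fun x hx => ?_⟩
  · have hss' : ‖x‖ - R ≤ ‖x'‖ - R := by linarith
    have hnorm : (‖x'‖ - R) - (‖x‖ - R) ≤ ‖x - x'‖ := by
      linarith [norm_sub_rev x x', norm_sub_norm_le x' x]
    simp only [tauN, ← mul_sub]
    rw [mul_assoc, mul_div_assoc]
    refine ⟨mul_nonneg hτ0.le (sub_nonneg.2 (antitone_r hk hss')),
      mul_le_mul_of_nonneg_left ((r_sub_r_le hk hss').trans ?_) hτ0.le⟩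
    exact div_le_div_of_nonneg_right (mul_le_mul_of_nonneg_right hnorm (q_pos _).le)
      (Q_pos hk).le
  · rw [tauN, r_of_nonpos (by linarith), mul_one]
  · rw [tauN, r_of_le hk (by linarith), mul_zero]

/-- Fix `τ ∈ (0,π)` and integers `R ≥ 2`, `n > R`. Then: (i) for all `x, x'` with
`‖x'‖ ≥ ‖x‖`, `0 ≤ τ_n(x) - τ_n(x') ≤ τ·‖x - x'‖·q(‖x‖-R)/Q(n-R)`;
(ii) `Q(n) → ∞` as `n → ∞`; (iii) `τ_n(x) = τ` for `‖x‖ ≤ R` and `τ_n(x) = 0` for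
`‖x‖ ≥ n`. -/
theorem stmt_2 (τ : ℝ) (hτ0 : 0 < τ) (hτπ : τ < Real.pi) (R n : ℤ)
    (hR : 2 ≤ R) (hn : R < n) :
    (∀ x x' : Fin 2 → ℝ, ‖x‖ ≤ ‖x'‖ →
      0 ≤ tauN τ R n x - tauN τ R n x' ∧
      tauN τ R n x - tauN τ R n x' ≤
        τ * ‖x - x'‖ * q (‖x‖ - (R : ℝ)) / Q ((n : ℝ) - (R : ℝ))) ∧
    Filter.Tendsto Q Filter.atTop Filter.atTop ∧
    (∀ x : Fin 2 → ℝ, ‖x‖ ≤ (R : ℝ) → tauN τ R n x = τ) ∧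
    (∀ x : Fin 2 → ℝ, (n : ℝ) ≤ ‖x‖ → tauN τ R n x = 0) :=
  stmt_2_general τ hτ0 R n hn
end
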